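/- In the time-invariant parameterization, assume there are constants 0 < b ≤ B such that b ≤ Λ*_t(y) ≤ B for every t and every y with p(y) > 0, and that there is a nonempty compact convex set Θ_ψ ⊂ ℝ^{N'} containing a point ψ* with Λ*_t(y) = Λ_t(ψ*;y) for all 1 ≤ t ≤ N and all y, such that b ≤ Λ_t(ψ;y) ≤ B for every ψ ∈ Θ_ψ, every 1 ≤ t ≤ N, and every y. Then the vector field G_s(ψ) = E[Σ_{t=1}^{N} (φ(h·Λ_t(ψ;y)) − y_t)·ξ_t(y)] is κ_s-strongly monotone on Θ_ψ: for all ψ, ψ̃ ∈ Θ_ψ, ⟨G_s(ψ) − G_s(ψ̃), ψ − ψ̃⟩ ≥ κ_s·‖ψ − ψ̃‖₂², where κ_s = e^{−h·b}·b·T·h·e^{−B·τ_max}. -/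

import Mathlib

open Finset
open scoped BigOperators RealInnerProductSpace

noncomputable section

/-- Real value of a Boolean: `1` if `true`, `0` if `false`. -/
def bval (b : Bool) : ℝ := if b then 1 else 0

/-- The time window of indices `-N'+1, …, N`. -/
def window (N N' : ℕ) : Finset ℤ := Finset.Icc (-(N' : ℤ) + 1) (N : ℤ)

/-- The probability mass function of the discrete-time Bernoulli process with
true conditional intensities `Λ`. -/
def seqPMF (N N' : ℕ) (h : ℝ) (Λ : ℤ → (ℤ → Bool) → ℝ) (y : ℤ → Bool) : ℝ :=
  ∏ t ∈ window N N',
    ((1 - bval (y t)) * Real.exp (-(h * Λ t y))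
      + bval (y t) * (1 - Real.exp (-(h * Λ t y))))

/-- Extension of a window-indexed binary sequence to all of `ℤ` (by `false`). -/
def extSeq (N N' : ℕ) (w : ↥(window N N') → Bool) : ℤ → Bool :=
  fun i => if hi : i ∈ window N N' then w ⟨i, hi⟩ else false

/-- Expectation with respect to the law of the process. -/
def expect (N N' : ℕ) (h : ℝ) (Λ : ℤ → (ℤ → Bool) → ℝ) (f : (ℤ → Bool) → ℝ) : ℝ :=
  ∑ w : ↥(window N N') → Bool, seqPMF N N' h Λ (extSeq N N' w) * f (extSeq N N' w)

/-- The link function `φ(x) = 1 - e^{-x}`. -/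
def phi (x : ℝ) : ℝ := 1 - Real.exp (-x)

/-- Expectation of a vector-valued statistic with respect to the law of the process. -/
def expectVec {E : Type*} [AddCommMonoid E] [Module ℝ E]
    (N N' : ℕ) (h : ℝ) (Λ : ℤ → (ℤ → Bool) → ℝ) (f : (ℤ → Bool) → E) : E :=
  ∑ w : ↥(window N N') → Bool, seqPMF N N' h Λ (extSeq N N' w) • f (extSeq N N' w)

/-- The history vector `ξ_t(y) ∈ ℝ^{N'}` with `l`-th entry `y_{t-l}`,
`l = 1, …, N'` (here the index `l : Fin N'` represents `l+1`). -/
def xi (N' : ℕ) (t : ℤ) (y : ℤ → Bool) : EuclideanSpace ℝ (Fin N') :=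
  WithLp.toLp 2 (fun l : Fin N' => bval (y (t - ((l : ℕ) + 1 : ℕ))))

/-- The time-invariant model intensity
`Λ_t(ψ; y) = μ + ∑_{l=1}^{N'} ψ_l y_{t-l} = μ + ⟨ξ_t(y), ψ⟩`. -/
def statIntensity (N' : ℕ) (μ : ℝ) (ψ : EuclideanSpace ℝ (Fin N')) (t : ℤ)
    (y : ℤ → Bool) : ℝ :=
  μ + ∑ l : Fin N', xi N' t y l * ψ l

/-!
The `y_t` terms cancel in `G_s(ψ) - G_s(ψ̃)`, leaving
`E[∑_t (φ(hΛ_t(ψ)) - φ(hΛ_t(ψ̃))) (Λ_t(ψ) - Λ_t(ψ̃))]`. Since `φ' = e^{-x} ≥ e^{-hB}` on the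
range of `hΛ`, each summand is at least `h e^{-hB} ⟨ξ_t, ψ - ψ̃⟩²`. On the event that the
window `t - N', …, t - 1` carries a single `1`, at `t - l`, we have `ξ_t = e_l`, so
`E⟨ξ_t, v⟩² ≥ ∑_l v_l² P(ξ_t = e_l)`. Writing the law as a product of conditional Bernoulli
probabilities, each such event has probability at least `φ(hb) e^{-hB(N'-1)}`, and
`φ(hb) ≥ hb e^{-hb}` gives the constant `κ_s`.
-/

lemma phi_nonneg {x : ℝ} (hx : 0 ≤ x) : 0 ≤ phi x := by
  simpa [phi] using Real.exp_le_one_iff.mpr (neg_nonpos.mpr hx)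

lemma phi_pos {x : ℝ} (hx : 0 < x) : 0 < phi x := by
  simpa [phi] using Real.exp_lt_one_iff.mpr (neg_lt_zero.mpr hx)

lemma one_sub_phi (x : ℝ) : 1 - phi x = Real.exp (-x) := by
  simp [phi]

lemma phi_le_phi {x y : ℝ} (hxy : x ≤ y) : phi x ≤ phi y := by
  simp only [phi]
  linarith [Real.exp_le_exp.mpr (neg_le_neg hxy)]

lemma mul_exp_neg_le_phi (x : ℝ) : x * Real.exp (-x) ≤ phi x := by
  have h := mul_le_mul_of_nonneg_right (Real.add_one_le_exp x) (Real.exp_pos (-x)).le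
  rw [← Real.exp_add, add_neg_cancel, Real.exp_zero] at h
  simp only [phi]
  linarith

lemma exp_neg_mul_sq_le_phi_sub_mul {x y c : ℝ} (hx : x ≤ c) (hy : y ≤ c) :
    Real.exp (-c) * (x - y) ^ 2 ≤ (phi x - phi y) * (x - y) := by
  wlog hyx : y ≤ x generalizing x y
  · have := this hy hx (le_of_not_ge hyx)
    linarith
  have phi_sub : phi x - phi y = Real.exp (-x) * (Real.exp (x - y) - 1) := by
    rw [phi, phi, mul_sub, ← Real.exp_add]
    ring_nf
  have hexp : Real.exp (-c) * (x - y) ≤ Real.exp (-x) * (Real.exp (x - y) - 1) :=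
    mul_le_mul (Real.exp_le_exp.mpr (neg_le_neg hx))
      (by linarith [Real.add_one_le_exp (x - y)]) (sub_nonneg.mpr hyx) (Real.exp_pos _).le
  rw [phi_sub, sq, ← mul_assoc]
  exact mul_le_mul_of_nonneg_right hexp (sub_nonneg.mpr hyx)

lemma mul_exp_neg_mul_sq_le_phi_mul_sub {h a a' B : ℝ} (hh : 0 < h) (ha : a ≤ B) (ha' : a' ≤ B) :
    h * Real.exp (-(h * B)) * (a - a') ^ 2 ≤ (phi (h * a) - phi (h * a')) * (a - a') := by
  have key := exp_neg_mul_sq_le_phi_sub_mul (mul_le_mul_of_nonneg_left ha hh.le)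
    (mul_le_mul_of_nonneg_left ha' hh.le)
  rw [← mul_sub, mul_pow, ← mul_assoc, mul_left_comm] at key
  refine le_of_mul_le_mul_left ?_ hh
  linarith

def bernoulliWeight (p : ℝ) (b : Bool) : ℝ := if b then p else 1 - p

lemma bernoulliWeight_add_not (p : ℝ) (b : Bool) :
    bernoulliWeight p b + bernoulliWeight p (!b) = 1 := by
  cases b <;> simp [bernoulliWeight]

lemma bernoulliWeight_phi_nonneg {x : ℝ} (hx : 0 ≤ x) (b : Bool) :
    0 ≤ bernoulliWeight (phi x) b := by
  cases b <;> simp [bernoulliWeight, one_sub_phi, phi_nonneg hx, (Real.exp_pos _).le]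

lemma bernoulliWeight_phi_pos {x : ℝ} (hx : 0 < x) (b : Bool) :
    0 < bernoulliWeight (phi x) b := by
  cases b <;> simp [bernoulliWeight, one_sub_phi, phi_pos hx, Real.exp_pos]

lemma prod_ite_eq_mul_pow {α M : Type*} [DecidableEq α] [CommMonoid M] {s : Finset α} {a : α}
    (ha : a ∈ s) (u c : M) : ∏ x ∈ s, (if x = a then u else c) = u * c ^ (#s - 1) := by
  rw [← mul_prod_erase _ _ ha, if_pos rfl, prod_congr rfl fun x hx => if_neg (ne_of_mem_erase hx),
    prod_const, card_erase_of_mem ha]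

section SequentialKernel

variable {ι : Type*} [LinearOrder ι]

/-- `r i w` plays the role of the conditional probability of the value `w i` given the past
`w j`, `j < i`. -/
structure IsSequentialKernel (r : ι → (ι → Bool) → ℝ) : Prop where
  congr_past : ∀ i w w', (∀ j ≤ i, w j = w' j) → r i w = r i w'
  add_update_not : ∀ i w, r i w + r i (Function.update w i (!w i)) = 1

namespace IsSequentialKernel

variable {r : ι → (ι → Bool) → ℝ}

lemma pin (hr : IsSequentialKernel r) (S : Finset ι) (z : ι → Bool) :
    IsSequentialKernel fun i w => if i ∈ S then (if w i = z i then 1 else 0) else r i w where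
  congr_past i w w' hw := by rw [hw i le_rfl, hr.congr_past i w w' hw]
  add_update_not i w := by
    split_ifs <;> simp_all [hr.add_update_not]

variable [Fintype ι]

lemma sum_prod_mul_two_pow (hr : IsSequentialKernel r) (s : Finset ι) :
    (∑ w : ι → Bool, ∏ i ∈ s, r i w) * 2 ^ #s = 2 ^ Fintype.card ι := by
  induction s using Finset.induction_on_max with
  | empty => simp [Fintype.card_bool]
  | insert a s hlt ih =>
    set flip : (ι → Bool) → (ι → Bool) := fun w => Function.update w a (!w a)
    have flip_involutive : Function.Involutive flip := fun w => by simp [flip]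
    have prod_flip : ∀ w, ∏ i ∈ s, r i (flip w) = ∏ i ∈ s, r i w := fun w =>
      prod_congr rfl fun i hi => hr.congr_past i _ _ fun j hj =>
        Function.update_of_ne (hj.trans_lt (hlt i hi)).ne _ _
    have sum_flip : ∑ w, r a (flip w) * ∏ i ∈ s, r i w = ∑ w, r a w * ∏ i ∈ s, r i w :=
      (Fintype.sum_bijective flip flip_involutive.bijective _ _ fun w => by
        rw [← prod_flip, flip_involutive w]).symm
    have hnot : a ∉ s := fun ha => (hlt a ha).false
    calc (∑ w, ∏ i ∈ insert a s, r i w) * 2 ^ #(insert a s)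
        = (∑ w, r a w * ∏ i ∈ s, r i w + ∑ w, r a (flip w) * ∏ i ∈ s, r i w) * 2 ^ #s := by
          rw [sum_flip, card_insert_of_notMem hnot]
          simp only [prod_insert hnot]
          ring
      _ = 2 ^ Fintype.card ι := by
          rw [← sum_add_distrib, ← ih]
          simp only [← add_mul, hr.add_update_not, one_mul, flip]

lemma sum_prod_eq_one (hr : IsSequentialKernel r) : ∑ w : ι → Bool, ∏ i, r i w = 1 := by
  have h := hr.sum_prod_mul_two_pow univ
  rw [card_univ] at h
  exact (mul_eq_right₀ (by positivity)).mp h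

lemma prod_le_sum_prod_mul_indicator (hr : IsSequentialKernel r) (hr0 : ∀ i w, 0 ≤ r i w)
    (S : Finset ι) (z : ι → Bool) (m : ι → ℝ) (hm0 : ∀ i ∈ S, 0 ≤ m i)
    (hm : ∀ i ∈ S, ∀ w, w i = z i → m i ≤ r i w) :
    ∏ i ∈ S, m i ≤ ∑ w : ι → Bool, (∏ i, r i w) * if ∀ i ∈ S, w i = z i then 1 else 0 := by
  -- Compare with the kernel pinned to `z` on `S`, which has total mass `1` as well.
  set r' : ι → (ι → Bool) → ℝ :=
    fun i w => if i ∈ S then (if w i = z i then 1 else 0) else r i w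
  have pointwise : ∀ w, (∏ i ∈ S, m i) * ∏ i, r' i w
      ≤ (∏ i, r i w) * ∏ i ∈ S, if w i = z i then 1 else 0 := fun w => by
    rw [← prod_mul_prod_compl S (r' · w), ← prod_mul_prod_compl S (r · w),
      prod_congr rfl fun i hi => if_pos hi, prod_congr rfl fun i hi => if_neg (mem_compl.mp hi),
      mul_right_comm _ (∏ i ∈ Sᶜ, r i w), ← mul_assoc, ← prod_mul_distrib, ← prod_mul_distrib]
    refine mul_le_mul_of_nonneg_right (prod_le_prod (fun i hi => ?_) fun i hi => ?_)
      (prod_nonneg fun i _ => hr0 i w)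
    · split_ifs <;> simp [hm0 i hi]
    · split_ifs with hz
      · simpa using hm i hi w hz
      · simp
  calc ∏ i ∈ S, m i = ∑ w, (∏ i ∈ S, m i) * ∏ i, r' i w := by
        rw [← mul_sum, (hr.pin S z).sum_prod_eq_one, mul_one]
    _ ≤ _ := sum_le_sum fun w _ => (pointwise w).trans_eq (by congr 1; convert prod_boole)

end IsSequentialKernel

end SequentialKernel

lemma xi_eq_single {N' : ℕ} {t : ℤ} {y : ℤ → Bool} (l : Fin N')
    (hy : ∀ s ∈ Icc (t - N') (t - 1), y s = decide (s = t - ((l : ℕ) + 1 : ℕ))) :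
    xi N' t y = EuclideanSpace.single l 1 := by
  ext l'
  have hmem : t - ((l' : ℕ) + 1 : ℕ) ∈ Icc (t - N') (t - 1) := by
    rw [mem_Icc]; push_cast; omega
  have hiff : t - ((l' : ℕ) + 1 : ℕ) = t - ((l : ℕ) + 1 : ℕ) ↔ l' = l := by
    rw [Fin.ext_iff]; push_cast; omega
  simp only [xi, WithLp.ofLp_toLp, hy _ hmem, PiLp.single_apply, hiff]
  split_ifs <;> simp [bval, *]

lemma sum_sq_mul_indicator_le_inner_sq {n : Type*} [Fintype n] [DecidableEq n]
    (x v : EuclideanSpace ℝ n) :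
    ∑ l, v l ^ 2 * (if x = EuclideanSpace.single l 1 then 1 else 0) ≤ ⟪x, v⟫ ^ 2 := by
  by_cases hx : ∃ l₀, x = EuclideanSpace.single l₀ 1
  · obtain ⟨l₀, rfl⟩ := hx
    have hsingle : ∀ l, EuclideanSpace.single l₀ (1 : ℝ) = EuclideanSpace.single l 1 ↔ l = l₀ :=
      fun l => ⟨fun he => by_contra fun hne => by
        simpa [hne] using congrArg (fun u : EuclideanSpace ℝ n => u l) he, fun he => he ▸ rfl⟩
    simp [hsingle, EuclideanSpace.inner_single_left]
  · simp only [not_exists] at hx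
    simpa [hx] using sq_nonneg ⟪x, v⟫

lemma statIntensity_sub (N' : ℕ) (μ : ℝ) (ψ ψ' : EuclideanSpace ℝ (Fin N')) (t : ℤ)
    (y : ℤ → Bool) :
    statIntensity N' μ ψ t y - statIntensity N' μ ψ' t y = ⟪xi N' t y, ψ - ψ'⟫ := by
  simp only [statIntensity, PiLp.inner_apply, RCLike.inner_apply, conj_trivial, PiLp.sub_apply,
    add_sub_add_left_eq_sub, ← sum_sub_distrib]
  exact sum_congr rfl fun l _ => by ring

lemma extSeq_coe (N N' : ℕ) (w : ↥(window N N') → Bool) (i : ↥(window N N')) :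
    extSeq N N' w i = w i := by
  simp [extSeq]

section BernoulliProcess

variable {N N' : ℕ} {h : ℝ} {Λ : ℤ → (ℤ → Bool) → ℝ} {b B : ℝ}

def seqKernel (N N' : ℕ) (h : ℝ) (Λ : ℤ → (ℤ → Bool) → ℝ) (i : ↥(window N N'))
    (w : ↥(window N N') → Bool) : ℝ :=
  bernoulliWeight (phi (h * Λ i (extSeq N N' w))) (w i)

lemma seqPMF_extSeq (w : ↥(window N N') → Bool) :
    seqPMF N N' h Λ (extSeq N N' w) = ∏ i, seqKernel N N' h Λ i w := by
  rw [seqPMF, ← prod_coe_sort]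
  refine prod_congr rfl fun i _ => ?_
  rw [seqKernel, extSeq_coe]
  cases w i <;> simp [bval, bernoulliWeight, phi]

lemma isSequentialKernel_seqKernel
    (hdep : ∀ (t : ℤ) (y y' : ℤ → Bool),
      (∀ i ∈ window N N', i < t → y i = y' i) → Λ t y = Λ t y') :
    IsSequentialKernel (seqKernel N N' h Λ) where
  congr_past i w w' hw := by
    have hΛ : Λ i (extSeq N N' w) = Λ i (extSeq N N' w') :=
      hdep i _ _ fun j hj hji => by
        simpa [extSeq, hj] using hw ⟨j, hj⟩ (Subtype.coe_le_coe.mp hji.le)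
    rw [seqKernel, seqKernel, hΛ, hw i le_rfl]
  add_update_not i w := by
    rw [seqKernel, seqKernel, Function.update_self]
    convert bernoulliWeight_add_not _ (w i) using 5
    refine hdep i _ _ fun j hj hji => ?_
    have hne : (⟨j, hj⟩ : ↥(window N N')) ≠ i := fun he => hji.ne (congrArg Subtype.val he)
    simp [extSeq, hj, hne]

/-- Every history can be cut off at time `i` and continued by zeros into a sequence of positive
probability without changing `Λ i`, so the almost sure bounds hold for every history. -/
lemma intensity_bounds_of_seqPMF_pos (hh : 0 < h) (hb : 0 < b)
    (hdep : ∀ (t : ℤ) (y y' : ℤ → Bool),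
      (∀ i ∈ window N N', i < t → y i = y' i) → Λ t y = Λ t y')
    (hstar : ∀ t ∈ window N N', ∀ y : ℤ → Bool,
      0 < seqPMF N N' h Λ y → b ≤ Λ t y ∧ Λ t y ≤ B)
    (i : ↥(window N N')) (w : ↥(window N N') → Bool) :
    b ≤ Λ i (extSeq N N' w) ∧ Λ i (extSeq N N' w) ≤ B := by
  induction i using WellFoundedLT.induction generalizing w with
  | _ i ih =>
    set w₀ : ↥(window N N') → Bool := fun j => j < i && w j
    have hpos : 0 < seqPMF N N' h Λ (extSeq N N' w₀) := by
      rw [seqPMF_extSeq]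
      refine prod_pos fun j _ => ?_
      by_cases hji : j < i
      · exact bernoulliWeight_phi_pos (mul_pos hh (hb.trans_le (ih j hji w₀).1)) _
      · simp only [seqKernel, w₀, decide_eq_false hji, Bool.false_and]
        simpa [bernoulliWeight, one_sub_phi] using Real.exp_pos _
    have hΛ : Λ i (extSeq N N' w₀) = Λ i (extSeq N N' w) :=
      hdep i _ _ fun j hj hji => by
        simp [extSeq, hj, w₀, show (⟨j, hj⟩ : ↥(window N N')) < i from hji]
    rw [← hΛ]
    exact hstar i i.2 _ hpos

lemma seqKernel_nonneg (hh : 0 < h) (hΛ : ∀ (i : ↥(window N N')) w, 0 ≤ Λ i (extSeq N N' w))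
    (i : ↥(window N N')) (w : ↥(window N N') → Bool) : 0 ≤ seqKernel N N' h Λ i w :=
  bernoulliWeight_phi_nonneg (mul_nonneg hh.le (hΛ i w)) _

lemma phi_mul_le_seqKernel (hh : 0 < h) {i : ↥(window N N')} {w : ↥(window N N') → Bool}
    (hΛ : b ≤ Λ i (extSeq N N' w)) (hw : w i = true) : phi (h * b) ≤ seqKernel N N' h Λ i w := by
  simpa [seqKernel, hw, bernoulliWeight] using phi_le_phi (mul_le_mul_of_nonneg_left hΛ hh.le)

lemma exp_neg_mul_le_seqKernel (hh : 0 < h) {i : ↥(window N N')} {w : ↥(window N N') → Bool}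
    (hΛ : Λ i (extSeq N N' w) ≤ B) (hw : w i = false) :
    Real.exp (-(h * B)) ≤ seqKernel N N' h Λ i w := by
  simpa [seqKernel, hw, bernoulliWeight, one_sub_phi] using mul_le_mul_of_nonneg_left hΛ hh.le

lemma seqPMF_extSeq_nonneg (hh : 0 < h) (hΛ : ∀ (i : ↥(window N N')) w, 0 ≤ Λ i (extSeq N N' w))
    (w : ↥(window N N') → Bool) : 0 ≤ seqPMF N N' h Λ (extSeq N N' w) := by
  rw [seqPMF_extSeq]
  exact prod_nonneg fun i _ => seqKernel_nonneg hh hΛ i w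

lemma expect_mono (hp : ∀ w, 0 ≤ seqPMF N N' h Λ (extSeq N N' w)) {f g : (ℤ → Bool) → ℝ}
    (hfg : ∀ y, f y ≤ g y) : expect N N' h Λ f ≤ expect N N' h Λ g :=
  sum_le_sum fun w _ => mul_le_mul_of_nonneg_left (hfg _) (hp w)

lemma expect_const_mul (c : ℝ) (f : (ℤ → Bool) → ℝ) :
    expect N N' h Λ (fun y => c * f y) = c * expect N N' h Λ f := by
  simp only [_root_.expect, mul_sum]
  exact sum_congr rfl fun w _ => by ring

lemma expect_sum {α : Type*} (s : Finset α) (f : α → (ℤ → Bool) → ℝ) :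
    expect N N' h Λ (fun y => ∑ a ∈ s, f a y) = ∑ a ∈ s, expect N N' h Λ (f a) := by
  simp only [_root_.expect, mul_sum]
  exact sum_comm

lemma inner_expectVec_sub {E : Type*} [NormedAddCommGroup E] [InnerProductSpace ℝ E]
    (f g : (ℤ → Bool) → E) (v : E) :
    ⟪expectVec N N' h Λ f - expectVec N N' h Λ g, v⟫
      = expect N N' h Λ (fun y => ⟪f y - g y, v⟫) := by
  simp only [expectVec, _root_.expect, ← sum_sub_distrib, ← smul_sub, sum_inner,
    real_inner_smul_left]

lemma xi_extSeq_eq_single {t : ℤ} (l : Fin N') (hpast : Icc (t - N') (t - 1) ⊆ window N N')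
    {w : ↥(window N N') → Bool}
    (hw : ∀ i ∈ (Icc (t - N') (t - 1)).subtype (· ∈ window N N'),
      w i = decide ((i : ℤ) = t - ((l : ℕ) + 1 : ℕ))) :
    xi N' t (extSeq N N' w) = EuclideanSpace.single l 1 :=
  xi_eq_single l fun s hs => by
    simp only [extSeq, dif_pos (hpast hs)]
    exact hw ⟨s, hpast hs⟩ (mem_subtype.mpr hs)

/-- The pattern pinned down is a single `1`, at `t - (l + 1)`, in the window `t - N', …, t - 1`;
each coordinate takes its pinned value with conditional probability at least `φ(hb)` or
`e^{-hB}`. -/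
lemma le_expect_xi_eq_single (hh : 0 < h) (hb : 0 < b)
    (hdep : ∀ (t : ℤ) (y y' : ℤ → Bool),
      (∀ i ∈ window N N', i < t → y i = y' i) → Λ t y = Λ t y')
    (hstar : ∀ t ∈ window N N', ∀ y : ℤ → Bool,
      0 < seqPMF N N' h Λ y → b ≤ Λ t y ∧ Λ t y ≤ B)
    {t : ℤ} (ht : t ∈ Icc (1 : ℤ) N) (l : Fin N') :
    phi (h * b) * Real.exp (-(h * B)) ^ (N' - 1)
      ≤ expect N N' h Λ (fun y => if xi N' t y = EuclideanSpace.single l 1 then 1 else 0) := by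
  have hbounds := intensity_bounds_of_seqPMF_pos hh hb hdep hstar
  have hΛ : ∀ (i : ↥(window N N')) w, 0 ≤ Λ i (extSeq N N' w) :=
    fun i w => hb.le.trans (hbounds i w).1
  set s₁ : ℤ := t - ((l : ℕ) + 1 : ℕ)
  have hpast : Icc (t - N') (t - 1) ⊆ window N N' := fun s hs => by
    rw [mem_Icc] at ht hs; rw [window, mem_Icc]; omega
  have hs₁ : s₁ ∈ Icc (t - N') (t - 1) := by
    rw [mem_Icc]; omega
  set m : ℤ → ℝ := fun s => if s = s₁ then phi (h * b) else Real.exp (-(h * B))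
  have hm0 : ∀ s, 0 ≤ m s := fun s => by
    simp only [m]
    split_ifs
    exacts [phi_nonneg (by positivity), (Real.exp_pos _).le]
  have hm : ∀ i ∈ (Icc (t - N') (t - 1)).subtype (· ∈ window N N'), ∀ w,
      w i = decide ((i : ℤ) = s₁) → m i ≤ seqKernel N N' h Λ i w := fun i _ w hw => by
    by_cases hi : (i : ℤ) = s₁
    · simpa [m, hi] using phi_mul_le_seqKernel hh (hbounds i w).1 (by simpa [hi] using hw)
    · simpa [m, hi] using exp_neg_mul_le_seqKernel hh (hbounds i w).2 (by simpa [hi] using hw)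
  calc phi (h * b) * Real.exp (-(h * B)) ^ (N' - 1)
      = ∏ i ∈ (Icc (t - N') (t - 1)).subtype (· ∈ window N N'), m i := by
        rw [prod_subtype_of_mem m fun s hs => hpast hs, prod_ite_eq_mul_pow hs₁, Int.card_Icc]
        congr 2
        omega
    _ ≤ ∑ w, (∏ i, seqKernel N N' h Λ i w) *
          if ∀ i ∈ (Icc (t - N') (t - 1)).subtype (· ∈ window N N'), w i = decide ((i : ℤ) = s₁)
          then 1 else 0 :=
        (isSequentialKernel_seqKernel hdep).prod_le_sum_prod_mul_indicator
          (seqKernel_nonneg hh hΛ) _ _ _ (fun i _ => hm0 i) hm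
    _ ≤ _ := sum_le_sum fun w _ => by
        rw [← seqPMF_extSeq]
        refine mul_le_mul_of_nonneg_left ?_ (seqPMF_extSeq_nonneg hh hΛ w)
        dsimp only
        split_ifs with hw hxi
        · exact le_rfl
        · exact absurd (xi_extSeq_eq_single l hpast hw) hxi
        all_goals norm_num

lemma mul_norm_sq_le_expect_inner_xi_sq (hh : 0 < h) (hb : 0 < b)
    (hdep : ∀ (t : ℤ) (y y' : ℤ → Bool),
      (∀ i ∈ window N N', i < t → y i = y' i) → Λ t y = Λ t y')
    (hstar : ∀ t ∈ window N N', ∀ y : ℤ → Bool,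
      0 < seqPMF N N' h Λ y → b ≤ Λ t y ∧ Λ t y ≤ B)
    {t : ℤ} (ht : t ∈ Icc (1 : ℤ) N) (v : EuclideanSpace ℝ (Fin N')) :
    phi (h * b) * Real.exp (-(B * (N' * h))) * ‖v‖ ^ 2
      ≤ Real.exp (-(h * B)) * expect N N' h Λ (fun y => ⟪xi N' t y, v⟫ ^ 2) := by
  have hp := seqPMF_extSeq_nonneg hh fun i w =>
    hb.le.trans (intensity_bounds_of_seqPMF_pos hh hb hdep hstar i w).1
  have hterm : ∀ l : Fin N', phi (h * b) * Real.exp (-(B * (N' * h))) * v l ^ 2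
      ≤ Real.exp (-(h * B)) * (v l ^ 2 *
          expect N N' h Λ (fun y => if xi N' t y = EuclideanSpace.single l 1 then 1 else 0)) := by
    intro l
    have hexp : Real.exp (-(B * (N' * h))) = Real.exp (-(h * B)) * Real.exp (-(h * B)) ^ (N' - 1) := by
      rw [← pow_succ', Nat.sub_add_cancel l.pos, ← Real.exp_nat_mul]
      ring_nf
    calc phi (h * b) * Real.exp (-(B * (N' * h))) * v l ^ 2
        = Real.exp (-(h * B)) * (v l ^ 2 * (phi (h * b) * Real.exp (-(h * B)) ^ (N' - 1))) := by
          rw [hexp]; ring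
      _ ≤ _ := by
          gcongr
          exact le_expect_xi_eq_single hh hb hdep hstar ht l
  rw [EuclideanSpace.real_norm_sq_eq, mul_sum]
  calc ∑ l, phi (h * b) * Real.exp (-(B * (N' * h))) * v l ^ 2
      ≤ ∑ l, Real.exp (-(h * B)) * (v l ^ 2 *
          expect N N' h Λ (fun y => if xi N' t y = EuclideanSpace.single l 1 then 1 else 0)) :=
        sum_le_sum fun l _ => hterm l
    _ = Real.exp (-(h * B)) * expect N N' h Λ (fun y =>
          ∑ l, v l ^ 2 * if xi N' t y = EuclideanSpace.single l 1 then 1 else 0) := by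
        simp only [expect_sum, expect_const_mul, mul_sum]
    _ ≤ _ := mul_le_mul_of_nonneg_left
        (expect_mono hp fun y => sum_sq_mul_indicator_le_inner_sq _ _) (Real.exp_pos _).le

end BernoulliProcess

theorem Gs_strongly_monotone_general
    (N N' : ℕ) (h : ℝ) (hh : 0 < h)
    (Λ : ℤ → (ℤ → Bool) → ℝ)
    (hdep : ∀ (t : ℤ) (y y' : ℤ → Bool),
      (∀ i ∈ window N N', i < t → y i = y' i) → Λ t y = Λ t y')
    (μ : ℝ)
    (b B : ℝ) (hb : 0 < b)
    (hstar : ∀ t ∈ window N N', ∀ y : ℤ → Bool,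
      0 < seqPMF N N' h Λ y → b ≤ Λ t y ∧ Λ t y ≤ B)
    (Θψ : Set (EuclideanSpace ℝ (Fin N')))
    (hphys : ∀ ψ ∈ Θψ, ∀ t ∈ Finset.Icc (1 : ℤ) (N : ℤ), ∀ y : ℤ → Bool,
      b ≤ statIntensity N' μ ψ t y ∧ statIntensity N' μ ψ t y ≤ B) :
    ∀ ψ ∈ Θψ, ∀ ψ' ∈ Θψ,
      ⟪expectVec N N' h Λ (fun y => ∑ t ∈ Finset.Icc (1 : ℤ) (N : ℤ),
            (phi (h * statIntensity N' μ ψ t y) - bval (y t)) • xi N' t y)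
        - expectVec N N' h Λ (fun y => ∑ t ∈ Finset.Icc (1 : ℤ) (N : ℤ),
            (phi (h * statIntensity N' μ ψ' t y) - bval (y t)) • xi N' t y),
        ψ - ψ'⟫
        ≥ (Real.exp (-(h * b)) * b * ((N : ℝ) * h) * h
            * Real.exp (-(B * ((N' : ℝ) * h)))) * ‖ψ - ψ'‖ ^ 2 := by
  intro ψ hψ ψ' hψ'
  have hp := seqPMF_extSeq_nonneg hh fun i w =>
    hb.le.trans (intensity_bounds_of_seqPMF_pos hh hb hdep hstar i w).1
  rw [ge_iff_le, inner_expectVec_sub]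
  calc Real.exp (-(h * b)) * b * ((N : ℝ) * h) * h * Real.exp (-(B * ((N' : ℝ) * h)))
        * ‖ψ - ψ'‖ ^ 2
      = N * (h * (h * b * Real.exp (-(h * b)) * Real.exp (-(B * (N' * h))) * ‖ψ - ψ'‖ ^ 2)) := by
        ring
    _ ≤ ∑ t ∈ Icc (1 : ℤ) N, h * (phi (h * b) * Real.exp (-(B * (N' * h))) * ‖ψ - ψ'‖ ^ 2) := by
        rw [sum_const, Int.card_Icc, add_sub_cancel_right, Int.toNat_natCast, nsmul_eq_mul]
        gcongr
        exact mul_exp_neg_le_phi _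
    _ ≤ ∑ t ∈ Icc (1 : ℤ) N,
          h * (Real.exp (-(h * B)) * expect N N' h Λ (fun y => ⟪xi N' t y, ψ - ψ'⟫ ^ 2)) :=
        sum_le_sum fun t ht => mul_le_mul_of_nonneg_left
          (mul_norm_sq_le_expect_inner_xi_sq hh hb hdep hstar ht _) hh.le
    _ = expect N N' h Λ (fun y =>
          ∑ t ∈ Icc (1 : ℤ) N, h * Real.exp (-(h * B)) * ⟪xi N' t y, ψ - ψ'⟫ ^ 2) := by
        simp only [expect_sum, expect_const_mul, mul_assoc]
    _ ≤ _ := expect_mono hp fun y => by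
        rw [← sum_sub_distrib, sum_inner]
        refine sum_le_sum fun t ht => ?_
        rw [← sub_smul, real_inner_smul_left, sub_sub_sub_cancel_right, ← statIntensity_sub]
        exact mul_exp_neg_mul_sq_le_phi_mul_sub hh (hphys ψ hψ t ht y).2 (hphys ψ' hψ' t ht y).2

/-- strong monotonicity of the stationary VI vector field
`G_s(ψ) = E[∑_{t=1}^N (φ(h Λ_t(ψ;y)) - y_t) ξ_t(y)]`. -/
theorem Gs_strongly_monotone
    (N N' : ℕ) (hN : 1 ≤ N) (hN' : 1 ≤ N') (h : ℝ) (hh : 0 < h)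
    (Λ : ℤ → (ℤ → Bool) → ℝ)
    (hdep : ∀ (t : ℤ) (y y' : ℤ → Bool),
      (∀ i ∈ window N N', i < t → y i = y' i) → Λ t y = Λ t y')
    (μ : ℝ) (hμ : 0 < μ)
    (b B : ℝ) (hb : 0 < b) (hbB : b ≤ B)
    (hstar : ∀ t ∈ window N N', ∀ y : ℤ → Bool,
      0 < seqPMF N N' h Λ y → b ≤ Λ t y ∧ Λ t y ≤ B)
    (Θψ : Set (EuclideanSpace ℝ (Fin N'))) (hne : Θψ.Nonempty)
    (hcomp : IsCompact Θψ) (hconv : Convex ℝ Θψ)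
    (ψstar : EuclideanSpace ℝ (Fin N')) (hψs : ψstar ∈ Θψ)
    (htrue : ∀ t ∈ Finset.Icc (1 : ℤ) (N : ℤ), ∀ y : ℤ → Bool,
      Λ t y = statIntensity N' μ ψstar t y)
    (hphys : ∀ ψ ∈ Θψ, ∀ t ∈ Finset.Icc (1 : ℤ) (N : ℤ), ∀ y : ℤ → Bool,
      b ≤ statIntensity N' μ ψ t y ∧ statIntensity N' μ ψ t y ≤ B) :
    ∀ ψ ∈ Θψ, ∀ ψ' ∈ Θψ,
      ⟪expectVec N N' h Λ (fun y => ∑ t ∈ Finset.Icc (1 : ℤ) (N : ℤ),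
            (phi (h * statIntensity N' μ ψ t y) - bval (y t)) • xi N' t y)
        - expectVec N N' h Λ (fun y => ∑ t ∈ Finset.Icc (1 : ℤ) (N : ℤ),
            (phi (h * statIntensity N' μ ψ' t y) - bval (y t)) • xi N' t y),
        ψ - ψ'⟫
        ≥ (Real.exp (-(h * b)) * b * ((N : ℝ) * h) * h
            * Real.exp (-(B * ((N' : ℝ) * h)))) * ‖ψ - ψ'‖ ^ 2 :=
  Gs_strongly_monotone_general N N' h hh Λ hdep μ b B hb hstar Θψ hphys
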